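/- Let λ > 0 and let V : ℝ⁴ → ℝ be continuous with 0 < λ < V₀ := inf_{x∈ℝ⁴} V(x) < lim_{|x|→∞} V(x) = γ < +∞. If u ∈ H²(ℝ⁴), u ≠ 0, satisfies (λ/4)∫_{ℝ⁴}( 2u²·exp(2u²) − (exp(2u²) − 1) ) dx ≤ m_V, then it cannot hold that ∫_{ℝ⁴}(|Δu|² + V(x)u²) dx < λ∫_{ℝ⁴} exp(2u²)·u² dx; that is, ∫_{ℝ⁴}(|Δu|² + V(x)u²) dx ≥ λ∫_{ℝ⁴} exp(2u²)·u² dx. -/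

import Mathlib

open MeasureTheory Real Filter

noncomputable section

/-- Euclidean space `ℝ⁴`. -/
abbrev E4 : Type := EuclideanSpace ℝ (Fin 4)

/-- The `i`-th partial derivative of `u`. -/
def pd (i : Fin 4) (u : E4 → ℝ) : E4 → ℝ :=
  fun x => fderiv ℝ u x (EuclideanSpace.single i 1)

/-- Membership in the Sobolev space `H²(ℝ⁴)`. -/
def MemH2 (u : E4 → ℝ) : Prop :=
  MemLp u 2 (volume : Measure E4) ∧ (∀ i, MemLp (pd i u) 2 (volume : Measure E4)) ∧
    ∀ i j, MemLp (pd i (pd j u)) 2 (volume : Measure E4)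

/-- The Laplacian of `u`. -/
def lap (u : E4 → ℝ) : E4 → ℝ := fun x => ∑ i, pd i (pd i u) x

/-- `u` is a weak solution of `(−Δ)²u + V(x)u = λ u exp(2u²)` in `ℝ⁴`. -/
def WeakSolV (V : E4 → ℝ) (lam : ℝ) (u : E4 → ℝ) : Prop :=
  MemH2 u ∧ ∀ v : E4 → ℝ, MemH2 v →
    (∫ x, (lap u x * lap v x + V x * u x * v x)) =
      lam * ∫ x, u x * Real.exp (2 * (u x) ^ 2) * v x

/-- The functional `I_V(u) = ½∫(|Δu|² + V u²) − (λ/4)∫(exp(2u²) − 1)`. -/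
def IV (V : E4 → ℝ) (lam : ℝ) (u : E4 → ℝ) : ℝ :=
  (1 / 2) * (∫ x, ((lap u x) ^ 2 + V x * (u x) ^ 2)) -
    (lam / 4) * ∫ x, (Real.exp (2 * (u x) ^ 2) - 1)

/-- `u` is a ground state solution of `(−Δ)²u + V(x)u = λ u exp(2u²)`: a
nontrivial weak solution minimizing `I_V` among all nontrivial weak solutions. -/
def GroundStateV (V : E4 → ℝ) (lam : ℝ) (u : E4 → ℝ) : Prop :=
  u ≠ 0 ∧ WeakSolV V lam u ∧
    ∀ w : E4 → ℝ, w ≠ 0 → WeakSolV V lam w → IV V lam u ≤ IV V lam w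

/-- The Nehari functional `N_V(u) = ∫(|Δu|² + V u²) − λ∫ exp(2u²) u²`. -/
def NV (V : E4 → ℝ) (lam : ℝ) (u : E4 → ℝ) : ℝ :=
  (∫ x, ((lap u x) ^ 2 + V x * (u x) ^ 2)) -
    lam * ∫ x, Real.exp (2 * (u x) ^ 2) * (u x) ^ 2

/-- The Nehari manifold `𝒩_V`. -/
def NehariV (V : E4 → ℝ) (lam : ℝ) : Set (E4 → ℝ) :=
  { u | MemH2 u ∧ u ≠ 0 ∧ NV V lam u = 0 }

/-- `m_V = inf{ I_V(u) : u ∈ 𝒩_V }`. -/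
def mV (V : E4 → ℝ) (lam : ℝ) : ℝ := sInf (IV V lam '' NehariV V lam)

/-- The `H²` inner product of two functions. -/
def innerH2 (u v : E4 → ℝ) : ℝ :=
  ∫ x, (u x * v x + (∑ i, pd i u x * pd i v x) +
    ∑ i, ∑ j, pd i (pd j u) x * pd i (pd j v) x)

/-- Weak convergence in `H²(ℝ⁴)` of a sequence `u_` to `u`. -/
def H2WeakTendsto (u_ : ℕ → E4 → ℝ) (u : E4 → ℝ) : Prop :=
  ∀ v : E4 → ℝ, MemH2 v → Tendsto (fun k => innerH2 (u_ k) v) atTop (nhds (innerH2 u v))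

/-- The Rabinowitz-type trapping condition on the potential `V`:
`0 < λ < V₀ = inf V < lim_{|x|→∞} V(x) = γ < +∞`. -/
def Rabinowitz (V : E4 → ℝ) (lam V₀ γ : ℝ) : Prop :=
  Continuous V ∧ 0 < lam ∧ lam < V₀ ∧ IsGLB (Set.range V) V₀ ∧ V₀ < γ ∧
    Tendsto V (cocompact E4) (nhds γ)

lemma pd_const_mul (c : ℝ) (hc : c ≠ 0) (f : E4 → ℝ) (i : Fin 4) :
    pd i (fun x => c * f x) = fun x => c * pd i f x := by
  funext x
  by_cases hd : DifferentiableAt ℝ f x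
  · simp [pd, fderiv_const_mul hd c]
  · have hd2 : ¬ DifferentiableAt ℝ (fun x => c * f x) x := by
      intro h
      have h2 := h.const_mul c⁻¹
      have he : (fun x => c⁻¹ * (c * f x)) = f := by
        funext y; field_simp
      rw [he] at h2
      exact hd h2
    simp [pd, fderiv_zero_of_not_differentiableAt hd,
      fderiv_zero_of_not_differentiableAt hd2]

lemma lap_const_mul (c : ℝ) (hc : c ≠ 0) (f : E4 → ℝ) :
    lap (fun x => c * f x) = fun x => c * lap f x := by
  funext x
  simp only [lap]
  rw [Finset.mul_sum]
  apply Finset.sum_congr rfl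
  intro i _
  rw [pd_const_mul c hc f i, pd_const_mul c hc (pd i f) i]

lemma memH2_const_mul {f : E4 → ℝ} (hf : MemH2 f) (c : ℝ) (hc : c ≠ 0) :
    MemH2 (fun x => c * f x) := by
  refine ⟨hf.1.const_mul c, fun i => ?_, fun i j => ?_⟩
  · rw [pd_const_mul c hc f i]; exact (hf.2.1 i).const_mul c
  · rw [pd_const_mul c hc f j, pd_const_mul c hc (pd j f) i]
    exact (hf.2.2 i j).const_mul c

lemma V_bound {V : E4 → ℝ} {γ : ℝ} (hVc : Continuous V)
    (hVt : Tendsto V (cocompact E4) (nhds γ)) : ∃ M : ℝ, ∀ x, |V x| ≤ M := by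
  have h1 : ∀ᶠ x in cocompact E4, dist (V x) γ < 1 :=
    hVt (Metric.ball_mem_nhds γ one_pos)
  rw [(Filter.hasBasis_cocompact).eventually_iff] at h1
  obtain ⟨K, hK, hKb⟩ := h1
  obtain ⟨C, hC⟩ := hK.exists_bound_of_continuousOn hVc.continuousOn
  refine ⟨max C (|γ| + 1), fun x => ?_⟩
  by_cases hx : x ∈ K
  · exact le_max_of_le_left (by simpa using hC x hx)
  · have h2 : dist (V x) γ < 1 := hKb hx
    rw [Real.dist_eq] at h2
    have h3 : |V x| ≤ |γ| + 1 := by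
      have := abs_add_le (V x - γ) γ
      simp only [sub_add_cancel] at this
      linarith
    exact le_max_of_le_right h3

lemma integrable_g1 {V : E4 → ℝ} {f : E4 → ℝ} (hf : MemH2 f)
    (hb : ∃ M : ℝ, ∀ x, |V x| ≤ M) (hVc : Continuous V) :
    Integrable (fun x => (lap f x) ^ 2 + V x * (f x) ^ 2) (volume : Measure E4) := by
  have hlap : MemLp (lap f) 2 (volume : Measure E4) := by
    have h := memLp_finset_sum (f := fun i => pd i (pd i f)) Finset.univ
      (fun i _ => hf.2.2 i i)
    exact h
  have h1 : Integrable (fun x => (lap f x) ^ 2) (volume : Measure E4) := hlap.integrable_sq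
  have h2 : Integrable (fun x => V x * (f x) ^ 2) (volume : Measure E4) := by
    obtain ⟨M, hM⟩ := hb
    exact (hf.1.integrable_sq).bdd_mul (hVc.aestronglyMeasurable)
      (c := M) (ae_of_all _ fun x => by simpa using hM x)
  exact h1.add h2

lemma exp_sub_one_le (s : ℝ) (hs : 0 ≤ s) : Real.exp s - 1 ≤ s * Real.exp s := by
  have h1 : (-s) + 1 ≤ Real.exp (-s) := Real.add_one_le_exp (-s)
  have h2 : Real.exp (-s) * Real.exp s = 1 := by rw [← Real.exp_add]; simp
  nlinarith [Real.exp_pos s, Real.exp_pos (-s)]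

lemma psi_mono' (c s : ℝ) (hc0 : 0 ≤ c) (hc1 : c ≤ 1) (hs : 0 ≤ s) :
    2*c*s*Real.exp (2*c*s) - (Real.exp (2*c*s) - 1) ≤
      2*s*Real.exp (2*s) - (Real.exp (2*s) - 1) := by
  have h1 : (2*c*s - 2*s) + 1 ≤ Real.exp (2*c*s - 2*s) := Real.add_one_le_exp _
  have h2 : Real.exp (2*c*s - 2*s) * Real.exp (2*s) = Real.exp (2*c*s) := by
    rw [← Real.exp_add]; congr 1; ring
  have h3 : Real.exp (2*c*s) ≤ Real.exp (2*s) := by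
    apply Real.exp_le_exp.mpr; nlinarith
  have h4 : ((2*c*s - 2*s) + 1) * Real.exp (2*s) ≤ Real.exp (2*c*s) := by
    have := mul_le_mul_of_nonneg_right h1 (Real.exp_pos (2*s)).le
    rwa [h2] at this
  have hint1 : 0 ≤ c * s * (Real.exp (2*s) - Real.exp (2*c*s)) :=
    mul_nonneg (mul_nonneg hc0 hs) (by linarith)
  nlinarith [h4, hint1]

lemma psi_strict' (c s : ℝ) (hc0 : 0 < c) (hc1 : c < 1) (hs : 0 < s) :
    2*c*s*Real.exp (2*c*s) - (Real.exp (2*c*s) - 1) <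
      2*s*Real.exp (2*s) - (Real.exp (2*s) - 1) := by
  have h1 : (2*c*s - 2*s) + 1 ≤ Real.exp (2*c*s - 2*s) := Real.add_one_le_exp _
  have h2 : Real.exp (2*c*s - 2*s) * Real.exp (2*s) = Real.exp (2*c*s) := by
    rw [← Real.exp_add]; congr 1; ring
  have h3 : Real.exp (2*c*s) < Real.exp (2*s) := by
    apply Real.exp_lt_exp.mpr; nlinarith
  have h4 : ((2*c*s - 2*s) + 1) * Real.exp (2*s) ≤ Real.exp (2*c*s) := by
    have := mul_le_mul_of_nonneg_right h1 (Real.exp_pos (2*s)).le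
    rwa [h2] at this
  have hint1 : 0 < c * s * (Real.exp (2*s) - Real.exp (2*c*s)) :=
    mul_pos (mul_pos hc0 hs) (by linarith)
  nlinarith [h4, hint1]

lemma IV_nonneg {V : E4 → ℝ} {lam V₀ γ : ℝ} (hV : Rabinowitz V lam V₀ γ)
    {v : E4 → ℝ} (hv : v ∈ NehariV V lam) : 0 ≤ IV V lam v := by
  obtain ⟨hVc, hlam, hlamV0, hglb, hV0γ, hVt⟩ := hV
  obtain ⟨hvH2, hv0, hNV⟩ := hv
  have hVlb : ∀ x, V₀ ≤ V x := fun x => hglb.1 ⟨x, rfl⟩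
  have hb := V_bound hVc hVt
  have hg1 := integrable_g1 hvH2 hb hVc
  have hvm : AEStronglyMeasurable v (volume : Measure E4) := hvH2.1.aestronglyMeasurable
  have hNV' : (∫ x, ((lap v x) ^ 2 + V x * (v x) ^ 2)) =
      lam * ∫ x, Real.exp (2 * (v x) ^ 2) * (v x) ^ 2 := by
    unfold NV at hNV; linarith
  by_cases hInt : Integrable (fun x => Real.exp (2 * (v x) ^ 2) * (v x) ^ 2) (volume : Measure E4)
  · have hQm : AEStronglyMeasurable (fun x => Real.exp (2 * (v x) ^ 2) - 1) (volume : Measure E4) := by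
      exact (Continuous.comp_aestronglyMeasurable (g := fun s : ℝ => Real.exp (2 * s ^ 2) - 1)
        (by continuity) hvm)
    have hQ : Integrable (fun x => Real.exp (2 * (v x) ^ 2) - 1) (volume : Measure E4) := by
      refine (hInt.const_mul 2).mono' hQm (ae_of_all _ fun x => ?_)
      have hs : (0:ℝ) ≤ 2 * (v x) ^ 2 := by positivity
      have h1 : 0 ≤ Real.exp (2 * (v x) ^ 2) - 1 := by
        nlinarith [Real.one_le_exp hs]
      have h2 := exp_sub_one_le (2 * (v x) ^ 2) hs
      rw [Real.norm_eq_abs, abs_of_nonneg h1]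
      calc Real.exp (2 * (v x) ^ 2) - 1 ≤ 2 * (v x) ^ 2 * Real.exp (2 * (v x) ^ 2) := by linarith
        _ = 2 * (Real.exp (2 * (v x) ^ 2) * (v x) ^ 2) := by ring
    have hBnn : 0 ≤ ∫ x, Real.exp (2 * (v x) ^ 2) * (v x) ^ 2 :=
      integral_nonneg fun x => by positivity
    have hDle : (∫ x, (Real.exp (2 * (v x) ^ 2) - 1)) ≤
        2 * ∫ x, Real.exp (2 * (v x) ^ 2) * (v x) ^ 2 := by
      rw [← integral_const_mul]
      refine integral_mono hQ (hInt.const_mul 2) fun x => ?_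
      have hs : (0:ℝ) ≤ 2 * (v x) ^ 2 := by positivity
      have h2 := exp_sub_one_le (2 * (v x) ^ 2) hs
      calc Real.exp (2 * (v x) ^ 2) - 1 ≤ 2 * (v x) ^ 2 * Real.exp (2 * (v x) ^ 2) := by linarith
        _ = 2 * (Real.exp (2 * (v x) ^ 2) * (v x) ^ 2) := by ring
    unfold IV
    rw [hNV']
    nlinarith [hBnn, hDle, hlam]
  · have hB0 : (∫ x, Real.exp (2 * (v x) ^ 2) * (v x) ^ 2) = 0 := integral_undef hInt
    have hC0 : (∫ x, ((lap v x) ^ 2 + V x * (v x) ^ 2)) = 0 := by rw [hNV', hB0]; ring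
    have hg1nn : (0:E4 → ℝ) ≤ fun x => (lap v x) ^ 2 + V x * (v x) ^ 2 := fun x => by
      simp only [Pi.zero_apply]
      nlinarith [hVlb x, hlam, hlamV0, sq_nonneg (lap v x), sq_nonneg (v x)]
    have hae : (fun x => (lap v x) ^ 2 + V x * (v x) ^ 2) =ᶠ[ae (volume : Measure E4)] 0 :=
      (integral_eq_zero_iff_of_nonneg hg1nn hg1).mp hC0
    have hv0ae : v =ᶠ[ae (volume : Measure E4)] 0 := by
      filter_upwards [hae] with x hx
      have hx' : (lap v x) ^ 2 + V x * (v x) ^ 2 = 0 := hx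
      have := hVlb x
      have hv2 : (v x) ^ 2 = 0 := by nlinarith [hlam, hlamV0, sq_nonneg (lap v x), sq_nonneg (v x)]
      simpa using pow_eq_zero_iff (n := 2) (by norm_num) |>.mp hv2
    have hD0 : (∫ x, (Real.exp (2 * (v x) ^ 2) - 1)) = 0 := by
      rw [integral_congr_ae (g := fun _ => (0:ℝ)) (by
        filter_upwards [hv0ae] with x hx
        simp only [Pi.zero_apply] at hx
        simp [hx])]
      simp
    unfold IV
    rw [hC0, hD0]
    simp

set_option maxHeartbeats 1000000 in
/-- Lemma: if `u ∈ H²(ℝ⁴)`, `u ≠ 0`, satisfies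
`(λ/4)∫(2u² exp(2u²) − (exp(2u²) − 1)) ≤ m_V`, then it cannot hold that
`∫(|Δu|² + V u²) < λ∫ exp(2u²) u²`. -/
theorem no_strict_subNehari
    (V : E4 → ℝ) (lam V₀ γ : ℝ) (hV : Rabinowitz V lam V₀ γ)
    (u : E4 → ℝ) (hu : MemH2 u) (hu0 : u ≠ 0)
    (hle : (lam / 4) * (∫ x, (2 * (u x) ^ 2 * Real.exp (2 * (u x) ^ 2) -
        (Real.exp (2 * (u x) ^ 2) - 1))) ≤ mV V lam) :
    lam * (∫ x, Real.exp (2 * (u x) ^ 2) * (u x) ^ 2) ≤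
      ∫ x, ((lap u x) ^ 2 + V x * (u x) ^ 2) := by
  obtain ⟨hVc, hlam, hlamV0, hglb, hV0γ, hVt⟩ := hV
  have hV' : Rabinowitz V lam V₀ γ := ⟨hVc, hlam, hlamV0, hglb, hV0γ, hVt⟩
  have hVlb : ∀ x, V₀ ≤ V x := fun x => hglb.1 ⟨x, rfl⟩
  have hb := V_bound hVc hVt
  have hg1 := integrable_g1 hu hb hVc
  have hum : AEStronglyMeasurable u (volume : Measure E4) := hu.1.aestronglyMeasurable
  have hAnn : 0 ≤ ∫ x, ((lap u x) ^ 2 + V x * (u x) ^ 2) :=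
    integral_nonneg fun x => by
      simp only [Pi.zero_apply]
      nlinarith [hVlb x, hlam, hlamV0, sq_nonneg (lap u x), sq_nonneg (u x)]
  by_cases hInt : Integrable (fun x => Real.exp (2 * (u x) ^ 2) * (u x) ^ 2) (volume : Measure E4)
  swap
  · rw [integral_undef hInt]; simpa using hAnn
  have hu2 : Integrable (fun x => (u x) ^ 2) (volume : Measure E4) := hu.1.integrable_sq
  by_cases hU0 : (∫ x, (u x) ^ 2) = 0
  · -- u = 0 a.e.
    have hu0ae : (fun x => (u x) ^ 2) =ᶠ[ae (volume : Measure E4)] 0 :=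
      (integral_eq_zero_iff_of_nonneg (fun x => sq_nonneg _) hu2).mp hU0
    have hB0 : (∫ x, Real.exp (2 * (u x) ^ 2) * (u x) ^ 2) = 0 := by
      rw [integral_congr_ae (g := fun _ => (0:ℝ)) (by
        filter_upwards [hu0ae] with x hx
        simp only [Pi.zero_apply] at hx
        simp [hx])]
      simp
    rw [hB0]; simpa using hAnn
  have hU2pos : 0 < ∫ x, (u x) ^ 2 :=
    lt_of_le_of_ne (integral_nonneg fun x => sq_nonneg _) (Ne.symm hU0)
  by_contra hcon
  push_neg at hcon
  -- abbreviations
  set A : ℝ := ∫ x, ((lap u x) ^ 2 + V x * (u x) ^ 2) with hA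
  -- parametrized integral
  set h : ℝ → ℝ := fun t => ∫ x, Real.exp (2 * t ^ 2 * (u x) ^ 2) * (u x) ^ 2 with hh
  have hmeas : ∀ t : ℝ, AEStronglyMeasurable
      (fun x => Real.exp (2 * t ^ 2 * (u x) ^ 2) * (u x) ^ 2) (volume : Measure E4) := fun t =>
    Continuous.comp_aestronglyMeasurable (g := fun s : ℝ => Real.exp (2 * t ^ 2 * s ^ 2) * s ^ 2)
      ((Real.continuous_exp.comp (continuous_const.mul (continuous_pow 2))).mul
        (continuous_pow 2)) hum
  have hbound : ∀ t : ℝ, t ∈ Set.Icc (0:ℝ) 1 → ∀ x : E4,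
      ‖Real.exp (2 * t ^ 2 * (u x) ^ 2) * (u x) ^ 2‖ ≤ Real.exp (2 * (u x) ^ 2) * (u x) ^ 2 := by
    intro t ht x
    have ht2 : t ^ 2 ≤ 1 := by nlinarith [ht.1, ht.2]
    have h1 : 2 * t ^ 2 * (u x) ^ 2 ≤ 2 * (u x) ^ 2 := by
      nlinarith [mul_nonneg (sub_nonneg.mpr ht2) (sq_nonneg (u x))]
    have h2 := Real.exp_le_exp.mpr h1
    rw [Real.norm_eq_abs, abs_of_nonneg (by positivity)]
    nlinarith [sq_nonneg (u x), Real.exp_pos (2 * t ^ 2 * (u x) ^ 2)]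
  have hdom : ∀ t : ℝ, t ∈ Set.Icc (0:ℝ) 1 →
      Integrable (fun x => Real.exp (2 * t ^ 2 * (u x) ^ 2) * (u x) ^ 2) (volume : Measure E4) :=
    fun t ht => hInt.mono' (hmeas t) (ae_of_all _ (hbound t ht))
  have hcontOn : ContinuousOn h (Set.Icc (0:ℝ) 1) := by
    intro t₀ _
    refine continuousWithinAt_of_dominated (bound := fun x => Real.exp (2 * (u x) ^ 2) * (u x) ^ 2)
      (Filter.Eventually.of_forall fun t => hmeas t) ?_ hInt ?_
    · filter_upwards [eventually_mem_nhdsWithin] with t ht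
      exact ae_of_all _ (hbound t ht)
    · refine ae_of_all _ fun x => Continuous.continuousWithinAt ?_
      exact (Real.continuous_exp.comp
        (((continuous_const.mul (continuous_pow 2)).mul continuous_const))).mul continuous_const
  set φ : ℝ → ℝ := fun t => A - lam * h t with hφ
  have hφcont : ContinuousOn φ (Set.Icc (0:ℝ) 1) :=
    continuousOn_const.sub (continuousOn_const.mul hcontOn)
  have hh0 : h 0 = ∫ x, (u x) ^ 2 := by
    simp only [hh]
    congr 1
    funext x
    norm_num
  have hh1 : h 1 = ∫ x, Real.exp (2 * (u x) ^ 2) * (u x) ^ 2 := by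
    simp only [hh]
    congr 1
    funext x
    norm_num
  have hAlb : V₀ * (∫ x, (u x) ^ 2) ≤ A := by
    rw [← integral_const_mul]
    exact integral_mono (hu2.const_mul V₀) hg1 fun x => by
      nlinarith [hVlb x, sq_nonneg (lap u x), sq_nonneg (u x)]
  have hφ0 : 0 < φ 0 := by
    simp only [hφ, hh0]
    nlinarith [hAlb, hU2pos, hlamV0]
  have hφ1 : φ 1 < 0 := by
    simp only [hφ, hh1]
    linarith [hcon]
  obtain ⟨t₀, ht₀mem, ht₀⟩ := intermediate_value_Icc' (by norm_num : (0:ℝ) ≤ 1) hφcont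
    ⟨hφ1.le, hφ0.le⟩
  have ht0pos : 0 < t₀ := by
    rcases lt_or_eq_of_le ht₀mem.1 with h | h
    · exact h
    · exfalso; rw [← h] at ht₀; rw [ht₀] at hφ0; exact lt_irrefl 0 hφ0
  have ht0lt1 : t₀ < 1 := by
    rcases lt_or_eq_of_le ht₀mem.2 with h | h
    · exact h
    · exfalso; rw [h] at ht₀; rw [ht₀] at hφ1; exact lt_irrefl 0 hφ1
  have hAeq : A = lam * h t₀ := by
    have : A - lam * h t₀ = 0 := ht₀
    linarith
  -- the rescaled function
  set w : E4 → ℝ := fun x => t₀ * u x with hwdef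
  have ht0ne : t₀ ≠ 0 := ne_of_gt ht0pos
  have hwH2 : MemH2 w := memH2_const_mul hu t₀ ht0ne
  have hlapw : lap w = fun x => t₀ * lap u x := lap_const_mul t₀ ht0ne u
  have hwsq : ∀ x, 2 * (w x) ^ 2 = 2 * t₀ ^ 2 * (u x) ^ 2 := fun x => by
    simp only [hwdef]; ring
  have hE1 : (fun x => (lap w x) ^ 2 + V x * (w x) ^ 2) =
      fun x => t₀ ^ 2 * ((lap u x) ^ 2 + V x * (u x) ^ 2) := by
    funext x
    rw [hlapw]
    simp only [hwdef]
    ring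
  have hE2 : (fun x => Real.exp (2 * (w x) ^ 2) * (w x) ^ 2) =
      fun x => t₀ ^ 2 * (Real.exp (2 * t₀ ^ 2 * (u x) ^ 2) * (u x) ^ 2) := by
    funext x
    rw [hwsq x]
    simp only [hwdef]
    ring
  have hE3 : (fun x => Real.exp (2 * (w x) ^ 2) - 1) =
      fun x => Real.exp (2 * t₀ ^ 2 * (u x) ^ 2) - 1 := by
    funext x
    rw [hwsq x]
  have ht₀Icc : t₀ ∈ Set.Icc (0:ℝ) 1 := ht₀mem
  have hIw : Integrable (fun x => Real.exp (2 * t₀ ^ 2 * (u x) ^ 2) * (u x) ^ 2)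
      (volume : Measure E4) := hdom t₀ ht₀Icc
  have hIg1w : (∫ x, ((lap w x) ^ 2 + V x * (w x) ^ 2)) = t₀ ^ 2 * A := by
    rw [hE1, integral_const_mul]
  have hIBw : (∫ x, Real.exp (2 * (w x) ^ 2) * (w x) ^ 2) = t₀ ^ 2 * h t₀ := by
    rw [hE2, integral_const_mul]
  have hNVw : NV V lam w = 0 := by
    unfold NV
    rw [hIg1w, hIBw, hAeq]
    ring
  have hwne : w ≠ 0 := by
    obtain ⟨x₀, hx₀⟩ := Function.ne_iff.mp hu0
    intro hcontra
    have : w x₀ = 0 := by rw [hcontra]; rfl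
    simp only [hwdef] at this
    exact hx₀ (by
      rcases mul_eq_zero.mp this with h | h
      · exact absurd h ht0ne
      · simpa using h)
  have hwN : w ∈ NehariV V lam := ⟨hwH2, hwne, hNVw⟩
  have hbdd : BddBelow (IV V lam '' NehariV V lam) := by
    refine ⟨0, fun y hy => ?_⟩
    obtain ⟨v, hv, rfl⟩ := hy
    exact IV_nonneg hV' hv
  have hmVle : mV V lam ≤ IV V lam w := csInf_le hbdd ⟨w, hwN, rfl⟩
  -- integrability of the psi integrands
  have hQw : Integrable (fun x => Real.exp (2 * t₀ ^ 2 * (u x) ^ 2) - 1) (volume : Measure E4) := by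
    refine ((hInt.const_mul 2)).mono'
      (Continuous.comp_aestronglyMeasurable (g := fun s : ℝ => Real.exp (2 * t₀ ^ 2 * s ^ 2) - 1)
        ((Real.continuous_exp.comp (continuous_const.mul (continuous_pow 2))).sub
          continuous_const) hum) (ae_of_all _ fun x => ?_)
    have hs : (0:ℝ) ≤ 2 * t₀ ^ 2 * (u x) ^ 2 := by positivity
    have h1 : 0 ≤ Real.exp (2 * t₀ ^ 2 * (u x) ^ 2) - 1 := by
      nlinarith [Real.one_le_exp hs]
    have h2 := exp_sub_one_le _ hs
    have h3 := hbound t₀ ht₀Icc x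
    rw [Real.norm_eq_abs] at h3 ⊢
    rw [abs_of_nonneg h1]
    rw [abs_of_nonneg (by positivity : (0:ℝ) ≤ Real.exp (2 * t₀ ^ 2 * (u x) ^ 2) * (u x) ^ 2)] at h3
    have ht1 : t₀ ^ 2 ≤ 1 := by nlinarith [ht0pos, ht0lt1]
    have hEu : (0:ℝ) ≤ Real.exp (2 * (u x) ^ 2) * (u x) ^ 2 := by positivity
    nlinarith [h2, mul_le_mul_of_nonneg_left h3 (by positivity : (0:ℝ) ≤ 2 * t₀ ^ 2),
      mul_nonneg (sub_nonneg.mpr ht1) hEu]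
  have hQu : Integrable (fun x => Real.exp (2 * (u x) ^ 2) - 1) (volume : Measure E4) := by
    refine ((hInt.const_mul 2)).mono'
      (Continuous.comp_aestronglyMeasurable (g := fun s : ℝ => Real.exp (2 * s ^ 2) - 1)
        ((Real.continuous_exp.comp (continuous_const.mul (continuous_pow 2))).sub
          continuous_const) hum) (ae_of_all _ fun x => ?_)
    have hs : (0:ℝ) ≤ 2 * (u x) ^ 2 := by positivity
    have h1 : 0 ≤ Real.exp (2 * (u x) ^ 2) - 1 := by nlinarith [Real.one_le_exp hs]
    have h2 := exp_sub_one_le _ hs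
    rw [Real.norm_eq_abs, abs_of_nonneg h1]
    nlinarith
  have hPw : Integrable (fun x => 2 * t₀ ^ 2 * (u x) ^ 2 * Real.exp (2 * t₀ ^ 2 * (u x) ^ 2))
      (volume : Measure E4) :=
    (hIw.const_mul (2 * t₀ ^ 2)).congr (ae_of_all _ fun x => by ring)
  have hPu : Integrable (fun x => 2 * (u x) ^ 2 * Real.exp (2 * (u x) ^ 2))
      (volume : Measure E4) :=
    (hInt.const_mul 2).congr (ae_of_all _ fun x => by ring)
  have hIVw : IV V lam w = (lam / 4) *
      ∫ x, (2 * t₀ ^ 2 * (u x) ^ 2 * Real.exp (2 * t₀ ^ 2 * (u x) ^ 2) -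
        (Real.exp (2 * t₀ ^ 2 * (u x) ^ 2) - 1)) := by
    unfold IV
    rw [hIg1w, hE3, hAeq]
    rw [integral_sub hPw hQw]
    have hP : (∫ x, 2 * t₀ ^ 2 * (u x) ^ 2 * Real.exp (2 * t₀ ^ 2 * (u x) ^ 2)) =
        2 * t₀ ^ 2 * h t₀ := by
      simp only [hh]
      rw [← integral_const_mul]
      congr 1; funext x; ring
    rw [hP]
    ring
  have hψw_int : Integrable (fun x => 2 * t₀ ^ 2 * (u x) ^ 2 * Real.exp (2 * t₀ ^ 2 * (u x) ^ 2) -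
      (Real.exp (2 * t₀ ^ 2 * (u x) ^ 2) - 1)) (volume : Measure E4) := hPw.sub hQw
  have hψu_int : Integrable (fun x => 2 * (u x) ^ 2 * Real.exp (2 * (u x) ^ 2) -
      (Real.exp (2 * (u x) ^ 2) - 1)) (volume : Measure E4) := hPu.sub hQu
  have ht0sq0 : 0 < t₀ ^ 2 := by positivity
  have ht0sq1 : t₀ ^ 2 < 1 := by nlinarith
  set D : E4 → ℝ := fun x =>
    (2 * (u x) ^ 2 * Real.exp (2 * (u x) ^ 2) - (Real.exp (2 * (u x) ^ 2) - 1)) -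
    (2 * t₀ ^ 2 * (u x) ^ 2 * Real.exp (2 * t₀ ^ 2 * (u x) ^ 2) -
      (Real.exp (2 * t₀ ^ 2 * (u x) ^ 2) - 1)) with hD
  have hDnn : 0 ≤ D := fun x => by
    simp only [hD, Pi.zero_apply]
    have := psi_mono' (t₀ ^ 2) ((u x) ^ 2) ht0sq0.le ht0sq1.le (sq_nonneg _)
    linarith
  have hDint : Integrable D (volume : Measure E4) := hψu_int.sub hψw_int
  have hsupp : Function.support (fun x => (u x) ^ 2) ⊆ Function.support D := by
    intro x hx
    have hx' : (u x) ^ 2 ≠ 0 := hx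
    have hxpos : 0 < (u x) ^ 2 := lt_of_le_of_ne (sq_nonneg _) (Ne.symm hx')
    have hstrict := psi_strict' (t₀ ^ 2) ((u x) ^ 2) ht0sq0 ht0sq1 hxpos
    simp only [Function.mem_support, hD]
    intro h0
    linarith
  have hsupp2 : 0 < volume (Function.support fun x => (u x) ^ 2) :=
    (integral_pos_iff_support_of_nonneg (fun x => sq_nonneg _) hu2).mp hU2pos
  have hDpos : 0 < ∫ x, D x :=
    (integral_pos_iff_support_of_nonneg hDnn hDint).mpr
      (lt_of_lt_of_le hsupp2 (measure_mono hsupp))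
  have hDeq : (∫ x, D x) =
      (∫ x, (2 * (u x) ^ 2 * Real.exp (2 * (u x) ^ 2) - (Real.exp (2 * (u x) ^ 2) - 1))) -
      ∫ x, (2 * t₀ ^ 2 * (u x) ^ 2 * Real.exp (2 * t₀ ^ 2 * (u x) ^ 2) -
        (Real.exp (2 * t₀ ^ 2 * (u x) ^ 2) - 1)) := by
    simp only [hD]
    exact integral_sub hψu_int hψw_int
  have hfrac : 0 < lam / 4 := by linarith
  have hlt : (lam / 4) * (∫ x, (2 * t₀ ^ 2 * (u x) ^ 2 * Real.exp (2 * t₀ ^ 2 * (u x) ^ 2) -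
      (Real.exp (2 * t₀ ^ 2 * (u x) ^ 2) - 1))) <
      (lam / 4) * ∫ x, (2 * (u x) ^ 2 * Real.exp (2 * (u x) ^ 2) -
        (Real.exp (2 * (u x) ^ 2) - 1)) := by
    apply mul_lt_mul_of_pos_left _ hfrac
    linarith [hDpos, hDeq]
  rw [hIVw] at hmVle
  linarith [hle, hmVle, hlt]
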